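/- arXiv:2506.07469 — 6 statements merged into one kernel-verified Lean document; each statement's English description precedes it below -/
import Mathlib

section
/- In the binary potential outcomes model with marginals p₀ = P(Y₀=1) and p₁ = P(Y₁=1), if α < min{p₀, p₁} and max{p₀, p₁} < 1−α, then there is a joint distribution of (Y₀, Y₁) compatible with the marginals with P(Y₁−Y₀ = 1) > α and a compatible joint distribution with P(Y₁−Y₀ = −1) > α, so the only prediction interval valid for all compatible joints at level 1−α is [−1,1]. -/
/-- `val` maps the Boolean coding of a binary outcome to its real value. -/
noncomputable def val (b : Bool) : ℝ := if b then 1 else 0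

/-- A joint pmf on `{0,1}²`; `P a b` is the probability that `Y₀ = a` and `Y₁ = b`,
with marginals `P(Y₀ = 1) = p₀` and `P(Y₁ = 1) = p₁`. -/
def IsJoint (p₀ p₁ : ℝ) (P : Bool → Bool → ℝ) : Prop :=
  (∀ a b, 0 ≤ P a b) ∧ (∑ a : Bool, ∑ b : Bool, P a b) = 1 ∧
    (P true true + P true false = p₀) ∧ (P true true + P false true = p₁)

open scoped Classical in
/-- `P(Y₁ - Y₀ ∈ S)` under the joint pmf `P` (first index `Y₀`, second `Y₁`). -/
noncomputable def probΔIn (P : Bool → Bool → ℝ) (S : Set ℝ) : ℝ :=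
  ∑ a : Bool, ∑ b : Bool, if val b - val a ∈ S then P a b else 0

/-- If `α < min{p₀,p₁}` and `max{p₀,p₁} < 1-α`, there are compatible joints with
`P(Y₁-Y₀=1) > α` and with `P(Y₁-Y₀=-1) > α`; hence any prediction set valid at level `1-α`
for all compatible joints must contain both `-1` and `1`, i.e. it must be `[-1,1]`. -/
theorem stmt_5 (p₀ p₁ α : ℝ) (hα0 : 0 < α) (hα : α < 1 / 2)
    (h₀ : 0 ≤ p₀) (h₀' : p₀ ≤ 1) (h₁ : 0 ≤ p₁) (h₁' : p₁ ≤ 1)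
    (hlo : α < min p₀ p₁) (hhi : max p₀ p₁ < 1 - α) :
    (∃ P : Bool → Bool → ℝ, IsJoint p₀ p₁ P ∧ α < probΔIn P {1}) ∧
    (∃ P : Bool → Bool → ℝ, IsJoint p₀ p₁ P ∧ α < probΔIn P {-1}) ∧
    (∀ S : Set ℝ,
      (∀ P : Bool → Bool → ℝ, IsJoint p₀ p₁ P → 1 - α ≤ probΔIn P S) →
      (-1 : ℝ) ∈ S ∧ (1 : ℝ) ∈ S) := by
  classical
  have hαp₀ : α < p₀ := lt_of_lt_of_le hlo (min_le_left _ _)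
  have hαp₁ : α < p₁ := lt_of_lt_of_le hlo (min_le_right _ _)
  have hp₀hi : p₀ < 1 - α := lt_of_le_of_lt (le_max_left _ _) hhi
  have hp₁hi : p₁ < 1 - α := lt_of_le_of_lt (le_max_right _ _) hhi
  set t : ℝ := max 0 (p₀ + p₁ - 1) with ht
  set P : Bool → Bool → ℝ := fun a b =>
    if a then (if b then t else p₀ - t) else (if b then p₁ - t else 1 - p₀ - p₁ + t) with hP
  have ht0 : 0 ≤ t := le_max_left _ _
  have htp₀ : t ≤ p₀ := max_le h₀ (by linarith)
  have htp₁ : t ≤ p₁ := max_le h₁ (by linarith)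
  have htsum : p₀ + p₁ - 1 ≤ t := le_max_right _ _
  have htlt₀ : t < p₀ - α := max_lt (by linarith) (by linarith)
  have htlt₁ : t < p₁ - α := max_lt (by linarith) (by linarith)
  have hjoint : IsJoint p₀ p₁ P := by
    refine ⟨?_, ?_, ?_, ?_⟩
    · intro a b
      cases a <;> cases b <;> simp [hP]
      all_goals linarith
    · simp [hP, Fintype.sum_bool]; try ring
    · simp [hP]
    · simp [hP]
  have hft : α < P false true := by simp [hP]; linarith
  have htf : α < P true false := by simp [hP]; linarith
  have hprob1 : probΔIn P {1} = P false true := by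
    norm_num [probΔIn, val, Fintype.sum_bool]
  have hprobm1 : probΔIn P {-1} = P true false := by
    norm_num [probΔIn, val, Fintype.sum_bool]
  refine ⟨⟨P, hjoint, by rw [hprob1]; exact hft⟩,
          ⟨P, hjoint, by rw [hprobm1]; exact htf⟩, ?_⟩
  intro S hS
  have key : ∀ v : ℝ, v ∉ S → ∀ Q : Bool → Bool → ℝ, IsJoint p₀ p₁ Q →
      probΔIn Q S ≤ 1 - probΔIn Q {v} := by
    intro v hv Q hQ
    obtain ⟨hpos, hsum, -, -⟩ := hQ
    have : probΔIn Q S + probΔIn Q {v} ≤ 1 := by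
      rw [← hsum]
      simp only [probΔIn, ← Finset.sum_add_distrib]
      refine Finset.sum_le_sum fun a _ => Finset.sum_le_sum fun b _ => ?_
      by_cases h1 : val b - val a ∈ S <;> by_cases h2 : val b - val a ∈ ({v} : Set ℝ) <;>
        simp [h1, h2, hpos a b]
      · exact absurd (h2 ▸ h1) hv
    linarith
  constructor
  · by_contra hm
    have := key (-1) hm P hjoint
    have h2 := hS P hjoint
    rw [hprobm1] at this
    linarith
  · by_contra hm
    have := key 1 hm P hjoint
    have h2 := hS P hjoint
    rw [hprob1] at this
    linarith
end

section
/- In the binary potential outcomes model with marginals p₀ = P(Y₀=1), p₁ = P(Y₁=1), the singleton {0} is a valid (1−α) prediction interval for Y₁−Y₀ under every compatible joint distribution if and only if p₀ + p₁ ≤ α or (1−p₀) + (1−p₁) ≤ α. -/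
/-- `P(Y₁ - Y₀ = δ)` under the joint pmf `P`. -/
noncomputable def probΔ (P : Bool → Bool → ℝ) (δ : ℝ) : ℝ :=
  ∑ a : Bool, ∑ b : Bool, if val b - val a = δ then P a b else 0

lemma probΔ_zero (P : Bool → Bool → ℝ) : probΔ P 0 = P false false + P true true := by
  simp [probΔ, val]
  ring

lemma IsJoint.abs_le_probΔ_zero {p₀ p₁ : ℝ} {P : Bool → Bool → ℝ} (hP : IsJoint p₀ p₁ P) :
    |1 - (p₀ + p₁)| ≤ probΔ P 0 := by
  obtain ⟨hnonneg, hsum, hm₀, hm₁⟩ := hP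
  simp only [Fintype.sum_bool] at hsum
  have h₀₀ := hnonneg false false
  have h₁₁ := hnonneg true true
  rw [probΔ_zero, abs_le]
  constructor <;> linarith

/-- The countermonotone coupling `Y₀ = 1[U < p₀]`, `Y₁ = 1[U > 1 - p₁]` with `U` uniform. -/
noncomputable def counterCoupling (p₀ p₁ : ℝ) : Bool → Bool → ℝ
  | true, true => max 0 (p₀ + p₁ - 1)
  | true, false => p₀ - max 0 (p₀ + p₁ - 1)
  | false, true => p₁ - max 0 (p₀ + p₁ - 1)
  | false, false => max 0 (1 - (p₀ + p₁))

lemma isJoint_counterCoupling {p₀ p₁ : ℝ} (h₀ : 0 ≤ p₀) (h₀' : p₀ ≤ 1) (h₁ : 0 ≤ p₁)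
    (h₁' : p₁ ≤ 1) : IsJoint p₀ p₁ (counterCoupling p₀ p₁) := by
  refine ⟨?_, ?_, by simp [counterCoupling], by simp [counterCoupling]⟩
  · rintro (_ | _) (_ | _) <;> simp only [counterCoupling] <;> grind
  · simp only [Fintype.sum_bool, counterCoupling]
    grind

lemma probΔ_counterCoupling_zero (p₀ p₁ : ℝ) :
    probΔ (counterCoupling p₀ p₁) 0 = |1 - (p₀ + p₁)| := by
  rw [probΔ_zero]
  simp only [counterCoupling]
  grind

/-- Sharp Fréchet lower bound on `P(Y₁ = Y₀)`. -/
theorem forall_isJoint_le_probΔ_zero_iff {p₀ p₁ : ℝ} (h₀ : 0 ≤ p₀) (h₀' : p₀ ≤ 1)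
    (h₁ : 0 ≤ p₁) (h₁' : p₁ ≤ 1) (c : ℝ) :
    (∀ P : Bool → Bool → ℝ, IsJoint p₀ p₁ P → c ≤ probΔ P 0) ↔ c ≤ |1 - (p₀ + p₁)| := by
  refine ⟨fun h => ?_, fun hc P hP => hc.trans hP.abs_le_probΔ_zero⟩
  simpa only [probΔ_counterCoupling_zero] using
    h _ (isJoint_counterCoupling h₀ h₀' h₁ h₁')

theorem stmt_6_general (p₀ p₁ α : ℝ)
    (h₀ : 0 ≤ p₀) (h₀' : p₀ ≤ 1) (h₁ : 0 ≤ p₁) (h₁' : p₁ ≤ 1) :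
    (∀ P : Bool → Bool → ℝ, IsJoint p₀ p₁ P → 1 - α ≤ probΔ P 0) ↔
      (p₀ + p₁ ≤ α ∨ (1 - p₀) + (1 - p₁) ≤ α) := by
  rw [forall_isJoint_le_probΔ_zero_iff h₀ h₀' h₁ h₁', le_abs', or_comm]
  refine or_congr ?_ ?_ <;> constructor <;> intro <;> linarith

/-- `{0}` is a valid `(1-α)` prediction interval for `Y₁ - Y₀` under every compatible joint
iff `p₀ + p₁ ≤ α` or `(1-p₀) + (1-p₁) ≤ α`. -/
theorem stmt_6 (p₀ p₁ α : ℝ) (hα0 : 0 < α) (hα : α < 1 / 2)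
    (h₀ : 0 ≤ p₀) (h₀' : p₀ ≤ 1) (h₁ : 0 ≤ p₁) (h₁' : p₁ ≤ 1) :
    (∀ P : Bool → Bool → ℝ, IsJoint p₀ p₁ P → 1 - α ≤ probΔ P 0) ↔
      (p₀ + p₁ ≤ α ∨ (1 - p₀) + (1 - p₁) ≤ α) :=
  stmt_6_general p₀ p₁ α h₀ h₀' h₁ h₁'
end

section
/- In the binary potential outcomes model with marginals p₀, p₁, the singleton {1} is a valid (1−α) prediction interval for Y₁−Y₀ under every compatible joint distribution if and only if p₁ − p₀ ≥ 1−α. -/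
lemma probΔ_one (P : Bool → Bool → ℝ) : probΔ P 1 = P false true := by
  norm_num [probΔ, val]

lemma IsJoint.sub_le_false_true {p₀ p₁ : ℝ} {P : Bool → Bool → ℝ} (hP : IsJoint p₀ p₁ P) :
    p₁ - p₀ ≤ P false true := by
  obtain ⟨hnonneg, -, hp₀, hp₁⟩ := hP
  linarith [hnonneg true false]

def comonotoneJoint (p₀ p₁ : ℝ) : Bool → Bool → ℝ
  | true, true => min p₀ p₁
  | true, false => p₀ - min p₀ p₁
  | false, true => p₁ - min p₀ p₁
  | false, false => 1 - max p₀ p₁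

lemma comonotoneJoint_false_true (p₀ p₁ : ℝ) :
    comonotoneJoint p₀ p₁ false true = max (p₁ - p₀) 0 := by
  rw [comonotoneJoint, ← max_sub_sub_left, sub_self]

lemma isJoint_comonotoneJoint {p₀ p₁ : ℝ} (h₀ : 0 ≤ p₀) (h₀' : p₀ ≤ 1) (h₁ : 0 ≤ p₁)
    (h₁' : p₁ ≤ 1) : IsJoint p₀ p₁ (comonotoneJoint p₀ p₁) := by
  refine ⟨?_, ?_, ?_, ?_⟩
  · rintro (_ | _) (_ | _) <;> simp only [comonotoneJoint, sub_nonneg]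
    exacts [max_le h₀' h₁', min_le_right _ _, min_le_left _ _, le_min h₀ h₁]
  · simp only [Fintype.sum_bool, comonotoneJoint]
    linarith [min_add_max p₀ p₁]
  all_goals simp only [comonotoneJoint]; ring

theorem forall_isJoint_le_probΔ_one_iff {p₀ p₁ : ℝ} (h₀ : 0 ≤ p₀) (h₀' : p₀ ≤ 1) (h₁ : 0 ≤ p₁)
    (h₁' : p₁ ≤ 1) (c : ℝ) :
    (∀ P : Bool → Bool → ℝ, IsJoint p₀ p₁ P → c ≤ probΔ P 1) ↔ c ≤ max (p₁ - p₀) 0 := by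
  refine ⟨fun h ↦ ?_, fun hc P hP ↦ ?_⟩
  · simpa [probΔ_one, comonotoneJoint_false_true] using
      h _ (isJoint_comonotoneJoint h₀ h₀' h₁ h₁')
  · rw [probΔ_one]
    exact hc.trans (max_le hP.sub_le_false_true (hP.1 false true))

theorem stmt_7_general (p₀ p₁ α : ℝ) (hα : α < 1 / 2)
    (h₀ : 0 ≤ p₀) (h₀' : p₀ ≤ 1) (h₁ : 0 ≤ p₁) (h₁' : p₁ ≤ 1) :
    (∀ P : Bool → Bool → ℝ, IsJoint p₀ p₁ P → 1 - α ≤ probΔ P 1) ↔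
      (1 - α ≤ p₁ - p₀) := by
  have hlevel : ¬ 1 - α ≤ 0 := by linarith
  rw [forall_isJoint_le_probΔ_one_iff h₀ h₀' h₁ h₁', le_max_iff, or_iff_left hlevel]

/-- `{1}` is a valid `(1-α)` prediction interval for `Y₁ - Y₀` under every compatible joint
iff `p₁ - p₀ ≥ 1 - α`. -/
theorem stmt_7 (p₀ p₁ α : ℝ) (hα0 : 0 < α) (hα : α < 1 / 2)
    (h₀ : 0 ≤ p₀) (h₀' : p₀ ≤ 1) (h₁ : 0 ≤ p₁) (h₁' : p₁ ≤ 1) :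
    (∀ P : Bool → Bool → ℝ, IsJoint p₀ p₁ P → 1 - α ≤ probΔ P 1) ↔
      (1 - α ≤ p₁ - p₀) :=
  stmt_7_general p₀ p₁ α hα h₀ h₀' h₁ h₁'
end

section
/- Let Y₀, Y₁ be real random variables with marginal distributions F₀, F₁, and let r₁, ℓ₀ ∈ ℝ be such that P(Y₁ > r₁) > α and P(Y₀ < ℓ₀) > α. Then there exists a joint distribution (coupling) of (Y₀, Y₁) with the given marginals under which P(Y₁ > r₁, Y₀ < ℓ₀) > α, and hence P(Y₁ − Y₀ > r₁ − ℓ₀) > α; consequently any interval that is a valid (1−α) prediction interval for Y₁−Y₀ under all couplings of these marginals must contain a point ≥ r₁ − ℓ₀. -/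
/-!
Let `m = min (F₀ A) (F₁ B)`. Split `F₀ = G₀ + H₀` where `G₀` is a multiple of `F₀` restricted to
`A` of mass `m`, and likewise `F₁ = G₁ + H₁` with `G₁` carried by `B`. The pairs `G₀, G₁` and
`H₀, H₁` have equal masses, so their normalized products add up to a coupling of `F₀` and `F₁`
which gives `A ×ˢ B` mass at least `m`.

For `A = {y | y < ℓ₀}` and `B = {y | r₁ < y}`, every point of `A ×ˢ B` has `p.2 - p.1 > r₁ - ℓ₀`.
Under this coupling a valid interval `I` carries mass `≥ 1 - α` and this event mass `> α`, so
they intersect.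
-/

open MeasureTheory

/-- A coupling of marginal distributions `F₀, F₁` on `ℝ` is a joint distribution on `ℝ × ℝ`
whose first marginal is `F₀` (the law of `Y₀`) and second marginal is `F₁` (the law of `Y₁`). -/
def IsCoupling (F₀ F₁ : Measure ℝ) (μ : Measure (ℝ × ℝ)) : Prop :=
  IsProbabilityMeasure μ ∧ μ.map Prod.fst = F₀ ∧ μ.map Prod.snd = F₁

open Set
open scoped ENNReal

namespace MeasureTheory.Measure

variable {α β : Type*} [MeasurableSpace α] [MeasurableSpace β]

lemma inv_measure_univ_mul_smul_self (ν : Measure α) [IsFiniteMeasure ν] :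
    ((ν univ)⁻¹ * ν univ) • ν = ν := by
  rcases eq_or_ne (ν univ) 0 with h | h
  · rw [measure_univ_eq_zero.mp h, smul_zero]
  · rw [ENNReal.inv_mul_cancel h (measure_ne_top ν univ), one_smul]

noncomputable def normalizedProd (ν₀ : Measure α) (ν₁ : Measure β) : Measure (α × β) :=
  (ν₀ univ)⁻¹ • ν₀.prod ν₁

variable {ν₀ : Measure α} {ν₁ : Measure β}

lemma map_fst_normalizedProd [IsFiniteMeasure ν₀] [SFinite ν₁] (h : ν₀ univ = ν₁ univ) :
    (normalizedProd ν₀ ν₁).map Prod.fst = ν₀ := by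
  rw [normalizedProd, Measure.map_smul, map_fst_prod, ← h, smul_smul,
    inv_measure_univ_mul_smul_self]

lemma map_snd_normalizedProd [IsFiniteMeasure ν₁] (h : ν₀ univ = ν₁ univ) :
    (normalizedProd ν₀ ν₁).map Prod.snd = ν₁ := by
  rw [normalizedProd, Measure.map_smul, map_snd_prod, h, smul_smul, inv_measure_univ_mul_smul_self]

lemma normalizedProd_prod [SFinite ν₁] (s : Set α) (t : Set β) :
    normalizedProd ν₀ ν₁ (s ×ˢ t) = (ν₀ univ)⁻¹ * (ν₀ s * ν₁ t) := by
  rw [normalizedProd, smul_apply, prod_prod, smul_eq_mul]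

lemma exists_add_eq_of_le_measure (F : Measure α) [IsFiniteMeasure F] {A : Set α}
    {m : ℝ≥0∞} (hm : m ≤ F A) :
    ∃ G H : Measure α, G + H = F ∧ G univ = m ∧ G A = m := by
  rcases eq_or_ne (F A) 0 with hA | hA
  · obtain rfl : m = 0 := nonpos_iff_eq_zero.mp (hA ▸ hm)
    exact ⟨0, F, zero_add F, rfl, rfl⟩
  set G := (m / F A) • F.restrict A
  have hG_le : G ≤ F := calc
    G ≤ (1 : ℝ≥0∞) • F.restrict A :=
      IsOrderedSMul.smul_le_smul_right _ _ (ENNReal.div_le_of_le_mul (by rwa [one_mul])) _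
    _ ≤ F := by rw [one_smul]; exact restrict_le_self
  have hGA : G A = m := by
    rw [smul_apply, restrict_apply_self, smul_eq_mul, ENNReal.div_mul_cancel hA (by finiteness)]
  have hGu : G univ = m := by
    rw [smul_apply, restrict_apply_univ, smul_eq_mul, ENNReal.div_mul_cancel hA (by finiteness)]
  have : IsFiniteMeasure G := isFiniteMeasure_of_le F hG_le
  exact ⟨G, F - G, by rw [add_comm, sub_add_cancel_of_le hG_le], hGu, hGA⟩

theorem exists_map_fst_map_snd_min_le_measure_prod (F₀ : Measure α) (F₁ : Measure β)
    [IsFiniteMeasure F₀] [IsFiniteMeasure F₁] (hF : F₀ univ = F₁ univ) (A : Set α) (B : Set β) :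
    ∃ μ : Measure (α × β), μ.map Prod.fst = F₀ ∧ μ.map Prod.snd = F₁ ∧
      min (F₀ A) (F₁ B) ≤ μ (A ×ˢ B) := by
  obtain ⟨G₀, H₀, hF₀, hG₀, hG₀A⟩ :=
    exists_add_eq_of_le_measure F₀ (min_le_left (F₀ A) (F₁ B))
  obtain ⟨G₁, H₁, hF₁, hG₁, hG₁B⟩ :=
    exists_add_eq_of_le_measure F₁ (min_le_right (F₀ A) (F₁ B))
  have : IsFiniteMeasure G₀ := isFiniteMeasure_of_le F₀ (hF₀ ▸ Measure.le_add_right le_rfl)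
  have : IsFiniteMeasure H₀ := isFiniteMeasure_of_le F₀ (hF₀ ▸ Measure.le_add_left le_rfl)
  have : IsFiniteMeasure G₁ := isFiniteMeasure_of_le F₁ (hF₁ ▸ Measure.le_add_right le_rfl)
  have : IsFiniteMeasure H₁ := isFiniteMeasure_of_le F₁ (hF₁ ▸ Measure.le_add_left le_rfl)
  have hG : G₀ univ = G₁ univ := hG₀.trans hG₁.symm
  have hH : H₀ univ = H₁ univ := by
    rwa [← hF₀, ← hF₁, add_apply, add_apply, hG, ENNReal.add_right_inj (measure_ne_top _ _)] at hF
  refine ⟨normalizedProd G₀ G₁ + normalizedProd H₀ H₁, ?_, ?_, ?_⟩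
  · rw [Measure.map_add _ _ measurable_fst, map_fst_normalizedProd hG, map_fst_normalizedProd hH,
      hF₀]
  · rw [Measure.map_add _ _ measurable_snd, map_snd_normalizedProd hG, map_snd_normalizedProd hH,
      hF₁]
  · calc min (F₀ A) (F₁ B) ≤ normalizedProd G₀ G₁ (A ×ˢ B) := by
          rw [normalizedProd_prod, hG₀A, hG₁B, ← hG₀]
          rcases eq_or_ne (G₀ univ) 0 with h | h
          · rw [h]; exact zero_le
          · rw [ENNReal.inv_mul_cancel_left h (measure_ne_top G₀ univ)]
      _ ≤ _ := le_add_right le_rfl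

end MeasureTheory.Measure

lemma MeasureTheory.nonempty_inter_of_ofReal_one_sub_le_of_ofReal_lt {Ω : Type*}
    [MeasurableSpace Ω] {μ : Measure Ω} [IsProbabilityMeasure μ] {s t : Set Ω} {α : ℝ}
    (ht : MeasurableSet t) (hμs : ENNReal.ofReal (1 - α) ≤ μ s)
    (hμt : ENNReal.ofReal α < μ t) : (s ∩ t).Nonempty := by
  refine nonempty_inter_of_measure_lt_add μ ht (subset_univ s) (subset_univ t) ?_
  calc μ univ = ENNReal.ofReal ((1 - α) + α) := by
        rw [measure_univ, sub_add_cancel, ENNReal.ofReal_one]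
    _ ≤ ENNReal.ofReal (1 - α) + ENNReal.ofReal α := ENNReal.ofReal_add_le
    _ < μ s + μ t := ENNReal.add_lt_add_of_le_of_lt ENNReal.ofReal_ne_top hμs hμt

theorem stmt_11_general (F₀ F₁ : Measure ℝ) [IsProbabilityMeasure F₀] [IsProbabilityMeasure F₁]
    (r₁ ℓ₀ α : ℝ)
    (h₁ : ENNReal.ofReal α < F₁ {y | r₁ < y})
    (h₀ : ENNReal.ofReal α < F₀ {y | y < ℓ₀}) :
    (∃ μ : Measure (ℝ × ℝ), IsCoupling F₀ F₁ μ ∧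
      ENNReal.ofReal α < μ {p | r₁ < p.2 ∧ p.1 < ℓ₀} ∧
      ENNReal.ofReal α < μ {p | r₁ - ℓ₀ < p.2 - p.1}) ∧
    (∀ I : Set ℝ,
      (∀ μ : Measure (ℝ × ℝ), IsCoupling F₀ F₁ μ →
        ENNReal.ofReal (1 - α) ≤ μ {p | p.2 - p.1 ∈ I}) →
      ∃ x ∈ I, r₁ - ℓ₀ ≤ x) := by
  obtain ⟨μ, hfst, hsnd, hmin⟩ := Measure.exists_map_fst_map_snd_min_le_measure_prod F₀ F₁
    (by simp) {y | y < ℓ₀} {y | r₁ < y}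
  have : IsProbabilityMeasure (μ.map Prod.fst) := hfst ▸ inferInstance
  have : IsProbabilityMeasure μ := Measure.isProbabilityMeasure_of_map Prod.fst
  have hμ : IsCoupling F₀ F₁ μ := ⟨‹_›, hfst, hsnd⟩
  have hjoint : ENNReal.ofReal α < μ {p | r₁ < p.2 ∧ p.1 < ℓ₀} := by
    rw [show {p : ℝ × ℝ | r₁ < p.2 ∧ p.1 < ℓ₀} = {y | y < ℓ₀} ×ˢ {y | r₁ < y} from
      Set.ext fun _ ↦ and_comm]
    exact (lt_min h₀ h₁).trans_le hmin
  have hdiff : ENNReal.ofReal α < μ {p | r₁ - ℓ₀ < p.2 - p.1} :=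
    hjoint.trans_le (measure_mono fun p hp ↦ sub_lt_sub hp.1 hp.2)
  refine ⟨⟨μ, hμ, hjoint, hdiff⟩, fun I hI ↦ ?_⟩
  obtain ⟨p, hpI, hp⟩ := nonempty_inter_of_ofReal_one_sub_le_of_ofReal_lt
    (measurableSet_lt measurable_const (measurable_snd.sub measurable_fst)) (hI μ hμ) hdiff
  exact ⟨p.2 - p.1, hpI, hp.le⟩

/-- If `P(Y₁ > r₁) > α` and `P(Y₀ < ℓ₀) > α` under the marginals, then some coupling puts
mass `> α` on `{Y₁ > r₁, Y₀ < ℓ₀}`, hence on `{Y₁ - Y₀ > r₁ - ℓ₀}`; consequently any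
prediction interval valid at level `1-α` under every coupling contains a point `≥ r₁ - ℓ₀`. -/
theorem stmt_11 (F₀ F₁ : Measure ℝ) [IsProbabilityMeasure F₀] [IsProbabilityMeasure F₁]
    (r₁ ℓ₀ α : ℝ) (hα0 : 0 < α) (hα : α < 1 / 2)
    (h₁ : ENNReal.ofReal α < F₁ {y | r₁ < y})
    (h₀ : ENNReal.ofReal α < F₀ {y | y < ℓ₀}) :
    (∃ μ : Measure (ℝ × ℝ), IsCoupling F₀ F₁ μ ∧
      ENNReal.ofReal α < μ {p | r₁ < p.2 ∧ p.1 < ℓ₀} ∧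
      ENNReal.ofReal α < μ {p | r₁ - ℓ₀ < p.2 - p.1}) ∧
    (∀ I : Set ℝ,
      (∀ μ : Measure (ℝ × ℝ), IsCoupling F₀ F₁ μ →
        ENNReal.ofReal (1 - α) ≤ μ {p | p.2 - p.1 ∈ I}) →
      ∃ x ∈ I, r₁ - ℓ₀ ≤ x) :=
  stmt_11_general F₀ F₁ r₁ ℓ₀ α h₁ h₀
end

section
/- Let Y₀, Y₁ be discrete random variables with given marginal pmfs on finite supports and fix δ. With L_i = max{P(Y₁=i) + P(Y₀=i−δ) − 1, 0} and U_i = min{P(Y₁=i), P(Y₀=i−δ)}, there exist couplings of the marginals attaining P(Y₁ − Y₀ = δ) = Σᵢ Lᵢ and P(Y₁ − Y₀ = δ) = Σᵢ Uᵢ; i.e., the bounds Σᵢ Lᵢ ≤ P(Y₁ − Y₀ = δ) ≤ Σᵢ Uᵢ are sharp. -/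
/-!
For the upper bound take the maximal coupling: put `min (p i) (q i)` on the diagonal and couple
the residuals `p - min p q` and `q - min p q` independently; their supports are disjoint, so they
add nothing to the diagonal.

For the lower bound, at most one atom `i₀` can have `p i₀ + q i₀ > 1`; if there is one, every
other atom of either marginal is sent to `i₀`. Otherwise we need a coupling with empty diagonal.
Let `P`, `Q` be the cumulative distribution functions, so that `i` owns the interval
`[P i, P (i + 1))` of the circle `ℝ / ℤ` under `p` and `[Q i, Q (i + 1))` under `q`. Rotating
the second partition by a suitable `θ` makes the two intervals of every `i` disjoint (this is
where `p i + q i ≤ 1` enters), and the joint law of the two quantile functions of a uniform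
point of the circle is the required coupling.

The shift by `δ` only relabels the atoms of `Y₀`.
-/

open Finset Filter

namespace FrechetCoupling

def overlap (a b c d : ℝ) : ℝ := max 0 (min b d - max a c)

lemma overlap_nonneg (a b c d : ℝ) : 0 ≤ overlap a b c d := le_max_left _ _

lemma overlap_comm (a b c d : ℝ) : overlap a b c d = overlap c d a b := by
  rw [overlap, overlap, min_comm b, max_comm a]

lemma overlap_add_const (a b c d t : ℝ) :
    overlap (a + t) (b + t) (c + t) (d + t) = overlap a b c d := by
  simp only [overlap, min_add_add_right, max_add_add_right, add_sub_add_right_eq_sub]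

lemma overlap_eq_zero_of_le_left {a b c d : ℝ} (h : b ≤ c) : overlap a b c d = 0 :=
  max_eq_left (by linarith [min_le_left b d, le_max_right a c])

lemma overlap_eq_zero_of_le_right {a b c d : ℝ} (h : d ≤ a) : overlap a b c d = 0 :=
  max_eq_left (by linarith [min_le_right b d, le_max_left a c])

lemma overlap_eq_sub {a b c d : ℝ} (hab : a ≤ b) (hcd : c ≤ d) :
    overlap a b c d = max a (min b d) - max a (min b c) := by
  simp only [overlap, max_def, min_def]
  split_ifs <;> linarith

lemma sum_Ico_sub_eq {h : ℤ → ℝ} {A B : ℤ} (hAB : A ≤ B) :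
    ∑ k ∈ Ico A B, (h (k + 1) - h k) = h B - h A := by
  induction B, hAB using Int.leInduction with
  | base => simp
  | succ n hn ih =>
    rw [← insert_Ico_right_eq_Ico_add_one hn, sum_insert right_notMem_Ico, ih]
    ring

lemma hasSum_sub_of_eventually_eq {h : ℤ → ℝ} {x y : ℝ} (hx : ∀ᶠ k in atBot, h k = x)
    (hy : ∀ᶠ k in atTop, h k = y) : HasSum (fun k => h (k + 1) - h k) (y - x) := by
  obtain ⟨A, hA⟩ := eventually_atBot.1 hx
  obtain ⟨B, hB⟩ := eventually_atTop.1 hy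
  have hB' : ∀ k, max A B ≤ k → h k = y := fun k hk => hB k (le_of_max_le_right hk)
  have hout : ∀ k ∉ Ico A (max A B), h (k + 1) - h k = 0 := by
    intro k hk
    rcases lt_or_ge k A with hkA | hkA
    · rw [hA k hkA.le, hA (k + 1) (by omega), sub_self]
    · have hk : max A B ≤ k := by simp_all
      rw [hB' k hk, hB' (k + 1) (by omega), sub_self]
  have hs : HasSum (fun k => h (k + 1) - h k) (∑ k ∈ Ico A (max A B), (h (k + 1) - h k)) :=
    hasSum_sum_of_ne_finset_zero hout
  rwa [sum_Ico_sub_eq (le_max_left A B), hA A le_rfl, hB' _ le_rfl] at hs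

lemma hasSum_overlap {a b : ℝ} (hab : a ≤ b) {G : ℤ → ℝ} (hG : Monotone G) {x y : ℝ}
    (hx : ∀ᶠ k in atBot, G k = x) (hy : ∀ᶠ k in atTop, G k = y) :
    HasSum (fun k => overlap a b (G k) (G (k + 1))) (max a (min b y) - max a (min b x)) := by
  simp_rw [overlap_eq_sub hab (hG (Int.le_add_one le_rfl))]
  exact hasSum_sub_of_eventually_eq (h := fun k => max a (min b (G k)))
    (hx.mono fun k hk => by rw [hk]) (hy.mono fun k hk => by rw [hk])

structure IsDiscreteCDF (P : ℤ → ℝ) : Prop where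
  mono : Monotone P
  eventually_atBot : ∀ᶠ k in atBot, P k = 0
  eventually_atTop : ∀ᶠ k in atTop, P k = 1

namespace IsDiscreteCDF

variable {P : ℤ → ℝ} (hP : IsDiscreteCDF P)
include hP

lemma nonneg (i : ℤ) : 0 ≤ P i := by
  obtain ⟨k, hk, hki⟩ := (hP.eventually_atBot.and (eventually_le_atBot i)).exists
  exact hk ▸ hP.mono hki

lemma le_one (i : ℤ) : P i ≤ 1 := by
  obtain ⟨k, hk, hik⟩ := (hP.eventually_atTop.and (eventually_ge_atTop i)).exists
  exact hk ▸ hP.mono hik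

end IsDiscreteCDF

lemma exists_isDiscreteCDF {p : ℤ → ℝ} (hp : ∀ i, 0 ≤ p i) (hfin : p.support.Finite)
    (hsum : HasSum p 1) : ∃ P, IsDiscreteCDF P ∧ ∀ i, P (i + 1) - P i = p i := by
  obtain ⟨A, hA⟩ := hfin.bddBelow
  obtain ⟨B, hB⟩ := hfin.bddAbove
  have hinc : ∀ i, ∑ j ∈ Ico A (i + 1), p j - ∑ j ∈ Ico A i, p j = p i := by
    intro i
    rcases lt_or_ge i A with hi | hi
    · have : p i = 0 := by_contra fun h => absurd (hA h) (not_le.2 hi)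
      rw [Ico_eq_empty (by omega), Ico_eq_empty (by omega), this, sub_self]
    · rw [← insert_Ico_right_eq_Ico_add_one hi, sum_insert right_notMem_Ico]
      ring
  refine ⟨fun i => ∑ j ∈ Ico A i, p j, ⟨monotone_int_of_le_succ fun i => ?_, ?_, ?_⟩, hinc⟩
  · linarith [hinc i, hp i]
  · filter_upwards [eventually_le_atBot A] with k hk
    rw [Ico_eq_empty (by omega), sum_empty]
  · filter_upwards [eventually_gt_atTop B] with k hk
    refine (hsum.unique (hasSum_sum_of_ne_finset_zero fun j hj => ?_)).symm
    by_contra h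
    have := hA h
    have := hB h
    simp only [mem_Ico, not_and, not_lt] at hj
    omega

structure IsCoupling {α β : Type*} (K : α → β → ℝ) (p : α → ℝ) (q : β → ℝ) : Prop where
  nonneg : ∀ a b, 0 ≤ K a b
  tsum_right : ∀ a, ∑' b, K a b = p a
  tsum_left : ∀ b, ∑' a, K a b = q b

/-- Length of `[P i, P (i + 1)) ∩ ([Q k, Q (k + 1)) + θ)` in `ℝ / ℤ`, for `0 ≤ θ ≤ 1`; the second
summand is the part that wraps around. -/
def rotationCoupling (P Q : ℤ → ℝ) (θ : ℝ) (i k : ℤ) : ℝ :=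
  overlap (P i) (P (i + 1)) (Q k + θ) (Q (k + 1) + θ) +
    overlap (P i) (P (i + 1)) (Q k + θ - 1) (Q (k + 1) + θ - 1)

section rotationCoupling

variable {P Q : ℤ → ℝ} {θ : ℝ}

lemma rotationCoupling_nonneg (i k : ℤ) : 0 ≤ rotationCoupling P Q θ i k :=
  add_nonneg (overlap_nonneg _ _ _ _) (overlap_nonneg _ _ _ _)

lemma hasSum_rotationCoupling_right (hP : IsDiscreteCDF P) (hQ : IsDiscreteCDF Q) (hθ₀ : 0 ≤ θ)
    (hθ₁ : θ ≤ 1) (i : ℤ) :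
    HasSum (rotationCoupling P Q θ i) (P (i + 1) - P i) := by
  have hi : P i ≤ P (i + 1) := hP.mono (Int.le_add_one le_rfl)
  have shift (c : ℝ) : Monotone fun k => Q k + c := fun _ _ h => by simpa using hQ.mono h
  convert (hasSum_overlap hi (shift θ) (x := θ) (y := 1 + θ)
      (hQ.eventually_atBot.mono fun k hk => by simp [hk])
      (hQ.eventually_atTop.mono fun k hk => by simp [hk])).add
    (hasSum_overlap hi (shift (θ - 1)) (x := θ - 1) (y := θ)
      (hQ.eventually_atBot.mono fun k hk => by simp [hk])
      (hQ.eventually_atTop.mono fun k hk => by simp [hk])) using 1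
  · ext k
    simp only [rotationCoupling, add_sub_assoc]
  · have htop : max (P i) (min (P (i + 1)) (1 + θ)) = P (i + 1) := by
      rw [min_eq_left (by linarith [hP.le_one (i + 1)]), max_eq_right hi]
    have hbot : max (P i) (min (P (i + 1)) (θ - 1)) = P i :=
      max_eq_left ((min_le_right _ _).trans (by linarith [hP.nonneg i]))
    rw [htop, hbot]
    ring

lemma hasSum_rotationCoupling_left (hP : IsDiscreteCDF P) (hQ : IsDiscreteCDF Q) (hθ₀ : 0 ≤ θ)
    (hθ₁ : θ ≤ 1) (k : ℤ) :
    HasSum (fun i => rotationCoupling P Q θ i k) (Q (k + 1) - Q k) := by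
  have hk : Q k + θ ≤ Q (k + 1) + θ := by linarith [hQ.mono (Int.le_add_one le_rfl : k ≤ k + 1)]
  have shift : Monotone fun i => P i + 1 := fun _ _ h => by simpa using hP.mono h
  convert (hasSum_overlap hk hP.mono hP.eventually_atBot hP.eventually_atTop).add
    (hasSum_overlap hk shift (x := 1) (y := 2)
      (hP.eventually_atBot.mono fun k hk => by simp [hk])
      (hP.eventually_atTop.mono fun k hk => by rw [hk]; norm_num)) using 1
  · ext i
    have hshift : overlap (P i) (P (i + 1)) (Q k + θ - 1) (Q (k + 1) + θ - 1) =
        overlap (Q k + θ) (Q (k + 1) + θ) (P i + 1) (P (i + 1) + 1) := by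
      rw [overlap_comm, ← overlap_add_const (Q k + θ - 1) _ _ _ 1]
      simp only [sub_add_cancel]
    rw [rotationCoupling, hshift, overlap_comm]
  · have htop : max (Q k + θ) (min (Q (k + 1) + θ) 2) = Q (k + 1) + θ := by
      rw [min_eq_left (by linarith [hQ.le_one (k + 1)]), max_eq_right hk]
    have hbot : max (Q k + θ) (min (Q (k + 1) + θ) 0) = Q k + θ :=
      max_eq_left ((min_le_right _ _).trans (by linarith [hQ.nonneg k]))
    rw [htop, hbot]
    ring

lemma rotationCoupling_self_eq_zero {i : ℤ} (hlo : P (i + 1) - Q i ≤ θ)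
    (hhi : θ ≤ P i - Q (i + 1) + 1) : rotationCoupling P Q θ i i = 0 := by
  rw [rotationCoupling, overlap_eq_zero_of_le_left (by linarith),
    overlap_eq_zero_of_le_right (by linarith), add_zero]

end rotationCoupling

lemma exists_rotation_parameter {P Q : ℤ → ℝ} (hP : IsDiscreteCDF P) (hQ : IsDiscreteCDF Q)
    (hPQ : ∀ i, P (i + 1) - P i + (Q (i + 1) - Q i) ≤ 1) :
    ∃ θ, 0 ≤ θ ∧ θ ≤ 1 ∧ ∀ i, P (i + 1) - Q i ≤ θ ∧ θ ≤ P i - Q (i + 1) + 1 := by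
  -- Every lower bound on `θ` lies below every upper bound; for `i = j` this is `hPQ i`.
  have hcross : ∀ i j, P (i + 1) - Q i ≤ P j - Q (j + 1) + 1 := by
    intro i j
    rcases lt_trichotomy i j with h | rfl | h
    · linarith [hP.mono (show i + 1 ≤ j by omega), hQ.nonneg i, hQ.le_one (j + 1)]
    · linarith [hPQ i]
    · linarith [hQ.mono (show j + 1 ≤ i by omega), hP.le_one (i + 1), hP.nonneg j]
  obtain ⟨θ, hlo, hhi⟩ := exists_between_of_forall_le
    (Set.range_nonempty fun i => P (i + 1) - Q i) (Set.range_nonempty fun j => P j - Q (j + 1) + 1)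
    (by rintro _ ⟨i, rfl⟩ _ ⟨j, rfl⟩; exact hcross i j)
  have hlo' (i : ℤ) : P (i + 1) - Q i ≤ θ := hlo ⟨i, rfl⟩
  have hhi' (j : ℤ) : θ ≤ P j - Q (j + 1) + 1 := hhi ⟨j, rfl⟩
  obtain ⟨i, hPi, hQi⟩ := (((tendsto_atTop_add_const_right atTop 1 tendsto_id).eventually
    hP.eventually_atTop).and hQ.eventually_atTop).exists
  obtain ⟨j, hPj, hQj⟩ := (hP.eventually_atBot.and
    ((tendsto_atBot_add_const_right atBot 1 tendsto_id).eventually hQ.eventually_atBot)).exists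
  simp only [id] at hPi hQj
  exact ⟨θ, by linarith [hlo' i], by linarith [hhi' j], fun i => ⟨hlo' i, hhi' i⟩⟩

theorem exists_isCoupling_diag_eq_zero {p q : ℤ → ℝ} (hp : ∀ i, 0 ≤ p i) (hq : ∀ i, 0 ≤ q i)
    (hpf : p.support.Finite) (hqf : q.support.Finite) (hp1 : HasSum p 1) (hq1 : HasSum q 1)
    (hpq : ∀ i, p i + q i ≤ 1) : ∃ K, IsCoupling K p q ∧ ∀ i, K i i = 0 := by
  obtain ⟨P, hP, hPp⟩ := exists_isDiscreteCDF hp hpf hp1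
  obtain ⟨Q, hQ, hQq⟩ := exists_isDiscreteCDF hq hqf hq1
  obtain ⟨θ, hθ₀, hθ₁, hθ⟩ := exists_rotation_parameter hP hQ fun i => by
    rw [hPp, hQq]
    exact hpq i
  refine ⟨rotationCoupling P Q θ,
    ⟨fun _ _ => rotationCoupling_nonneg _ _, fun i => ?_, fun k => ?_⟩,
    fun i => rotationCoupling_self_eq_zero (hθ i).1 (hθ i).2⟩
  · rw [(hasSum_rotationCoupling_right hP hQ hθ₀ hθ₁ i).tsum_eq, hPp]
  · rw [(hasSum_rotationCoupling_left hP hQ hθ₀ hθ₁ k).tsum_eq, hQq]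

section

variable {α : Type*} {p q : α → ℝ}

lemma add_lt_one_of_one_lt_add {a₀ a : α} (hp : ∀ a, 0 ≤ p a) (hq : ∀ a, 0 ≤ q a)
    (hp1 : HasSum p 1) (hq1 : HasSum q 1) (ha₀ : 1 < p a₀ + q a₀) (ha : a ≠ a₀) :
    p a + q a < 1 := by
  classical
  have hpa := sum_le_hasSum {a, a₀} (fun i _ => hp i) hp1
  have hqa := sum_le_hasSum {a, a₀} (fun i _ => hq i) hq1
  rw [sum_pair ha] at hpa hqa
  linarith

theorem exists_isCoupling_diag_eq_max_of_one_lt {a₀ : α} (hp : ∀ a, 0 ≤ p a)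
    (hq : ∀ a, 0 ≤ q a) (hp1 : HasSum p 1) (hq1 : HasSum q 1) (ha₀ : 1 < p a₀ + q a₀) :
    ∃ K, IsCoupling K p q ∧ ∀ a, K a a = max (p a + q a - 1) 0 := by
  classical
  set T := p a₀ + q a₀ - 1
  refine ⟨fun a b => if a = a₀ then Function.update q a₀ T b else if b = a₀ then p a else 0,
    ⟨fun a b => ?_, fun a => ?_, fun b => ?_⟩, fun a => ?_⟩
  · simp only [Function.update_apply]
    split_ifs
    exacts [by linarith, hq b, hp a, le_rfl]
  · by_cases ha : a = a₀
    · rw [ha]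
      simp only [if_true]
      rw [(hq1.update a₀ T).tsum_eq]
      ring
    · simp only [ha, if_false]
      exact tsum_ite_eq a₀ fun _ => p a
  · by_cases hb : b = a₀
    · subst hb
      have hcol : (fun a => if a = b then Function.update q b T b else if b = b then p a else 0) =
          Function.update p b T := by
        ext a
        by_cases ha : a = b <;> simp [ha]
      rw [hcol, (hp1.update b T).tsum_eq]
      ring
    · simp only [hb, if_false, Function.update_of_ne hb]
      exact tsum_ite_eq a₀ fun _ => q b
  · by_cases ha : a = a₀
    · subst ha
      simp [T, le_of_lt (sub_pos.2 ha₀)]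
    · simp only [ha, if_false]
      exact (max_eq_right (by linarith [add_lt_one_of_one_lt_add hp hq hp1 hq1 ha₀ ha])).symm

theorem exists_isCoupling_diag_eq_min (hp : ∀ a, 0 ≤ p a) (hq : ∀ a, 0 ≤ q a) {s : ℝ}
    (hps : HasSum p s) (hqs : HasSum q s) :
    ∃ K, IsCoupling K p q ∧ ∀ a, K a a = min (p a) (q a) := by
  classical
  set m := fun a => min (p a) (q a)
  have hm : HasSum m (∑' a, m a) := (hps.summable.of_nonneg_of_le
    (fun a => le_min (hp a) (hq a)) fun a => min_le_left _ _).hasSum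
  set c := s - ∑' a, m a
  have hr : HasSum (fun a => p a - m a) c := hps.sub hm
  have hs : HasSum (fun b => q b - m b) c := hqs.sub hm
  have hr0 (a : α) : 0 ≤ p a - m a := sub_nonneg.2 (min_le_left _ _)
  have hs0 (b : α) : 0 ≤ q b - m b := sub_nonneg.2 (min_le_right _ _)
  have hr_zero (a : α) (hc : c = 0) : p a - m a = 0 :=
    le_antisymm (hc ▸ le_hasSum hr a fun b _ => hr0 b) (hr0 a)
  have hs_zero (b : α) (hc : c = 0) : q b - m b = 0 :=
    le_antisymm (hc ▸ le_hasSum hs b fun a _ => hs0 a) (hs0 b)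
  have hdiag_row (a : α) : HasSum (fun b => if a = b then m a else 0) (m a) := by
    simpa using hasSum_single (f := fun b => if a = b then m a else 0) a
      fun b hb => if_neg (Ne.symm hb)
  have hdiag_col (b : α) : HasSum (fun a => if a = b then m a else 0) (m b) := by
    simpa using hasSum_single (f := fun a => if a = b then m a else 0) b fun a ha => if_neg ha
  refine ⟨fun a b => (if a = b then m a else 0) + (p a - m a) * (q b - m b) / c,
    ⟨fun a b => add_nonneg ?_ ?_, fun a => ?_, fun b => ?_⟩, fun a => ?_⟩
  · split_ifs
    exacts [le_min (hp a) (hq a), le_rfl]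
  · exact div_nonneg (mul_nonneg (hr0 a) (hs0 b)) (hr.nonneg hr0)
  · rw [((hdiag_row a).add ((hs.mul_left (p a - m a)).div_const c)).tsum_eq,
      mul_div_cancel_of_imp (hr_zero a)]
    ring
  · rw [((hdiag_col b).add ((hr.mul_right (q b - m b)).div_const c)).tsum_eq,
      mul_comm c, mul_div_cancel_of_imp (hs_zero b)]
    ring
  · have hprod : (p a - m a) * (q a - m a) = 0 := by
      rcases le_total (p a) (q a) with h | h
      · simp [m, min_eq_left h]
      · simp [m, min_eq_right h]
    simp [hprod, m]

end

theorem exists_isCoupling_diag_eq_max {p q : ℤ → ℝ} (hp : ∀ i, 0 ≤ p i) (hq : ∀ i, 0 ≤ q i)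
    (hpf : p.support.Finite) (hqf : q.support.Finite) (hp1 : HasSum p 1) (hq1 : HasSum q 1) :
    ∃ K, IsCoupling K p q ∧ ∀ i, K i i = max (p i + q i - 1) 0 := by
  by_cases hheavy : ∃ i₀, 1 < p i₀ + q i₀
  · obtain ⟨i₀, hi₀⟩ := hheavy
    exact exists_isCoupling_diag_eq_max_of_one_lt hp hq hp1 hq1 hi₀
  · simp only [not_exists, not_lt] at hheavy
    obtain ⟨K, hK, hdiag⟩ := exists_isCoupling_diag_eq_zero hp hq hpf hqf hp1 hq1 hheavy
    exact ⟨K, hK, fun i => by rw [hdiag, max_eq_right (by linarith [hheavy i])]⟩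

lemma IsCoupling.shift {K : ℤ → ℤ → ℝ} {p q : ℤ → ℝ} {δ : ℤ}
    (h : IsCoupling K p fun i => q (i - δ)) : IsCoupling (fun i j => K i (j + δ)) p q where
  nonneg i j := h.nonneg i (j + δ)
  tsum_right i := ((Equiv.addRight δ).tsum_eq (K i)).trans (h.tsum_right i)
  tsum_left j := by simpa using h.tsum_left (j + δ)

end FrechetCoupling

/-- Sharpness of the Fréchet pmf bounds for finitely supported marginals: there exist
couplings `J` (with `J i j = P(Y₁ = i, Y₀ = j)`) of the marginals `f₁` (for `Y₁`) and `f₀`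
(for `Y₀`) attaining `P(Y₁ - Y₀ = δ) = Σᵢ max{f₁ i + f₀ (i-δ) - 1, 0}` and
`P(Y₁ - Y₀ = δ) = Σᵢ min{f₁ i, f₀ (i-δ)}` respectively. -/
theorem stmt_14 (f₀ f₁ : ℤ → ℝ)
    (h₀ : ∀ j, 0 ≤ f₀ j) (h₁ : ∀ i, 0 ≤ f₁ i)
    (hfin₀ : (Function.support f₀).Finite) (hfin₁ : (Function.support f₁).Finite)
    (hs₀ : ∑' j, f₀ j = 1) (hs₁ : ∑' i, f₁ i = 1) (δ : ℤ) :
    (∃ J : ℤ → ℤ → ℝ, (∀ i j, 0 ≤ J i j) ∧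
      (∀ i, ∑' j, J i j = f₁ i) ∧ (∀ j, ∑' i, J i j = f₀ j) ∧
      (∑' i, J i (i - δ)) = ∑' i, max (f₁ i + f₀ (i - δ) - 1) 0) ∧
    (∃ J : ℤ → ℤ → ℝ, (∀ i j, 0 ≤ J i j) ∧
      (∀ i, ∑' j, J i j = f₁ i) ∧ (∀ j, ∑' i, J i j = f₀ j) ∧
      (∑' i, J i (i - δ)) = ∑' i, min (f₁ i) (f₀ (i - δ))) := by
  have hp1 : HasSum f₁ 1 := hs₁ ▸ (summable_of_hasFiniteSupport hfin₁).hasSum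
  have hq1 : HasSum (fun i => f₀ (i - δ)) 1 :=
    (Equiv.subRight δ).hasSum_iff.2 (hs₀ ▸ (summable_of_hasFiniteSupport hfin₀).hasSum)
  have hqf : (Function.support fun i => f₀ (i - δ)).Finite :=
    hfin₀.preimage sub_left_injective.injOn
  obtain ⟨K, hK, hKdiag⟩ :=
    FrechetCoupling.exists_isCoupling_diag_eq_max h₁ (fun i => h₀ _) hfin₁ hqf hp1 hq1
  obtain ⟨K', hK', hK'diag⟩ :=
    FrechetCoupling.exists_isCoupling_diag_eq_min h₁ (fun i => h₀ _) hp1 hq1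
  refine ⟨⟨_, hK.shift.nonneg, hK.shift.tsum_right, hK.shift.tsum_left, ?_⟩,
    ⟨_, hK'.shift.nonneg, hK'.shift.tsum_right, hK'.shift.tsum_left, ?_⟩⟩
  · simp only [sub_add_cancel, hKdiag]
  · simp only [sub_add_cancel, hK'diag]
end

section
/- (Strassen's theorem for finite sets, singleton-constraint corollary) Let A, B be finite sets, P a probability measure on A, P′ a probability measure on B, and δ a real number, with A, B ⊂ ℝ. If P({a}) ≤ 1 − P′({a − δ}) for every a ∈ A, then there exists a coupling P̂ of P and P′ on A × B with P̂({(a,b) : a − b = δ}) = 0. -/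
/-!
Translating `B` by `δ` turns the forbidden pairs `a - b = δ` into the diagonal, so it suffices to
couple `P` and `Q` of equal mass `t` on one type without mass on the diagonal when
`P a + Q a ≤ t` everywhere. Induct on the support of `P`. The row at a new point `a` is any
`g` with `0 ≤ g ≤ Q`, `g a = 0`, total mass `P a` and `g x ≥ P x + Q x - (t - P a)` for the
other points `x`; the rest of the coupling comes from the induction hypothesis applied to
`P` without `a` and `Q - g`. Such a `g` exists by interpolation, since the positive parts of these
lower bounds sum to at most `P a`: for one point by the hypothesis there, for two or more
because `P` and `Q` have mass at most `t - P a` and `t` on them.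
-/

open Finset Function

lemma exists_le_le_sum_eq {ι : Type*} (s : Finset ι) {l u : ι → ℝ} (hlu : ∀ i, l i ≤ u i)
    {c : ℝ} (hl : ∑ i ∈ s, l i ≤ c) (hu : c ≤ ∑ i ∈ s, u i) :
    ∃ g : ι → ℝ, (∀ i, l i ≤ g i) ∧ (∀ i, g i ≤ u i) ∧ ∑ i ∈ s, g i = c := by
  set F : ℝ → ℝ := fun θ => ∑ i ∈ s, (l i + θ * (u i - l i))
  have hF : ContinuousOn F (Set.Icc 0 1) := by fun_prop
  obtain ⟨θ, ⟨hθ0, hθ1⟩, hθ⟩ :=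
    intermediate_value_Icc zero_le_one hF (by simpa [F] using And.intro hl hu)
  refine ⟨fun i => l i + θ * (u i - l i), fun i => ?_, fun i => ?_, hθ⟩
  · nlinarith [hlu i]
  · nlinarith [hlu i]

lemma sum_max_zero_add_sub_le {ι : Type*} (s : Finset ι) {x y : ι → ℝ} {u t : ℝ}
    (hx : ∀ i ∈ s, 0 ≤ x i) (hy : ∀ i ∈ s, 0 ≤ y i) (hxu : ∑ i ∈ s, x i ≤ u)
    (hyt : ∑ i ∈ s, y i ≤ t) (hxy : ∀ i ∈ s, x i + y i ≤ t) (hut : u ≤ t) :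
    ∑ i ∈ s, max 0 (x i + y i - u) ≤ t - u := by
  classical
  set T := s.filter fun i => 0 < x i + y i - u
  have hsumT : ∑ i ∈ s, max 0 (x i + y i - u) = ∑ i ∈ T, (x i + y i - u) := by
    rw [sum_filter]
    refine sum_congr rfl fun i _ => ?_
    split_ifs with h
    exacts [max_eq_right h.le, max_eq_left (not_lt.1 h)]
  have hTs : T ⊆ s := filter_subset _ _
  rcases Nat.lt_or_ge T.card 2 with hT | hT
  · obtain hT0 | hT1 : T.card = 0 ∨ T.card = 1 := by omega
    · rw [hsumT, card_eq_zero.1 hT0, sum_empty, sub_nonneg]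
      exact hut
    · obtain ⟨i, hi⟩ := card_eq_one.1 hT1
      have : i ∈ s := hTs (hi ▸ mem_singleton_self i)
      rw [hsumT, hi, sum_singleton]
      linarith [hxy i this]
  · have hx' := sum_le_sum_of_subset_of_nonneg hTs fun i hi _ => hx i hi
    have hy' := sum_le_sum_of_subset_of_nonneg hTs fun i hi _ => hy i hi
    have hu : 0 ≤ u := (sum_nonneg hx).trans hxu
    have hT' : (2 : ℝ) ≤ T.card := by exact_mod_cast hT
    rw [hsumT, sum_sub_distrib, sum_add_distrib, sum_const, nsmul_eq_mul]
    nlinarith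

lemma sum_le_sum_of_forall_notMem_eq_zero {ι : Type*} [DecidableEq ι] (s : Finset ι)
    {B : Finset ι} {f : ι → ℝ} (hf : ∀ i, 0 ≤ f i) (hfB : ∀ i ∉ B, f i = 0) :
    ∑ i ∈ s, f i ≤ ∑ i ∈ B, f i :=
  calc ∑ i ∈ s, f i = ∑ i ∈ s ∩ B, f i :=
        (sum_subset inter_subset_left fun i hi hiB =>
          hfB i fun h => hiB (mem_inter.2 ⟨hi, h⟩)).symm
    _ ≤ ∑ i ∈ B, f i := sum_le_sum_of_subset_of_nonneg inter_subset_right fun i _ _ => hf i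

variable {α β γ : Type*}

structure IsCoupling_s16 (A : Finset α) (B : Finset β) (P : α → ℝ) (Q : β → ℝ)
    (J : α → β → ℝ) : Prop where
  nonneg : ∀ a b, 0 ≤ J a b
  eq_zero : ∀ a b, a ∉ A ∨ b ∉ B → J a b = 0
  sum_right : ∀ a, ∑ b ∈ B, J a b = P a
  sum_left : ∀ b, ∑ a ∈ A, J a b = Q b

namespace IsCoupling_s16

variable {A : Finset α} {B : Finset β} {P : α → ℝ} {Q : β → ℝ} {J : α → β → ℝ}

lemma of_empty (B : Finset β) (hP : ∀ a, P a = 0) (hQ : ∀ b, Q b = 0) :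
    IsCoupling_s16 ∅ B P Q 0 where
  nonneg _ _ := le_rfl
  eq_zero _ _ _ := rfl
  sum_right a := by simp [hP a]
  sum_left b := by simp [hQ b]

lemma update_insert [DecidableEq α] {a : α} (ha : a ∉ A) {g : β → ℝ} (hg : ∀ b, 0 ≤ g b)
    (hgB : ∀ b ∉ B, g b = 0) (hga : ∑ b ∈ B, g b = P a)
    (hJ : IsCoupling_s16 A B (update P a 0) (Q - g) J) :
    IsCoupling_s16 (insert a A) B P Q (update J a g) where
  nonneg x b := by
    rcases eq_or_ne x a with rfl | hx
    · simpa using hg b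
    · simpa [hx] using hJ.nonneg x b
  eq_zero x b h := by
    rcases eq_or_ne x a with rfl | hx
    · simpa using hgB b (h.resolve_left (by simp))
    · simpa [hx] using hJ.eq_zero x b (by simpa [hx] using h)
  sum_right x := by
    rcases eq_or_ne x a with rfl | hx
    · simpa using hga
    · simpa [hx] using hJ.sum_right x
  sum_left b := by
    have hA : ∀ x ∈ A, update J a g x b = J x b := fun x hx => by
      rw [update_of_ne (ne_of_mem_of_not_mem hx ha)]
    rw [sum_insert ha, sum_congr rfl hA, hJ.sum_left, update_self, Pi.sub_apply]
    ring

lemma comp_equiv (e : γ ≃ β) {J : α → γ → ℝ}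
    (hJ : IsCoupling_s16 A (B.map e.symm.toEmbedding) P (Q ∘ e) J) :
    IsCoupling_s16 A B P Q (fun a b => J a (e.symm b)) where
  nonneg a b := hJ.nonneg a _
  eq_zero a b h := hJ.eq_zero a _ (by simpa using h)
  sum_right a := by simpa using hJ.sum_right a
  sum_left b := by simpa using hJ.sum_left (e.symm b)

end IsCoupling_s16

lemma exists_row_of_add_le [DecidableEq α] {a : α} {s B : Finset α} (ha : a ∉ s)
    {P Q : α → ℝ} {t : ℝ} (hP : ∀ x, 0 ≤ P x) (hQ : ∀ b, 0 ≤ Q b) (hQB : ∀ b ∉ B, Q b = 0)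
    (hPt : P a + ∑ x ∈ s, P x = t) (hQt : ∑ b ∈ B, Q b = t)
    (hPQ : ∀ x ∈ insert a s, P x + Q x ≤ t) :
    ∃ g : α → ℝ, (∀ b, 0 ≤ g b) ∧ (∀ b, g b ≤ Q b) ∧ g a = 0 ∧ ∑ b ∈ B, g b = P a ∧
      ∀ x ∈ s, P x + Q x - (t - P a) ≤ g x := by
  set lb : α → ℝ := fun b => if b ∈ s then max 0 (P b + Q b - (t - P a)) else 0
  have hlb : ∀ b, 0 ≤ lb b := fun b => by
    simp only [lb]; split_ifs
    exacts [le_max_left _ _, le_rfl]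
  have hPs : ∀ x ∈ s, P x + P a ≤ t := fun x hx => by
    linarith [single_le_sum (fun y _ => hP y) hx]
  have hlu : ∀ b, lb b ≤ update Q a 0 b := fun b => by
    simp only [lb]; split_ifs with hb
    · rw [update_of_ne (ne_of_mem_of_not_mem hb ha)]
      exact max_le (hQ b) (by linarith [hPs b hb])
    · rcases eq_or_ne b a with rfl | hba <;> simp [*]
  have hl : ∑ b ∈ B, lb b ≤ P a :=
    calc ∑ b ∈ B, lb b = ∑ b ∈ B ∩ s, max 0 (P b + Q b - (t - P a)) := sum_ite_mem B s _
      _ ≤ ∑ b ∈ s, max 0 (P b + Q b - (t - P a)) :=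
          sum_le_sum_of_subset_of_nonneg inter_subset_right fun b _ _ => le_max_left _ _
      _ ≤ t - (t - P a) :=
          sum_max_zero_add_sub_le s (fun x _ => hP x) (fun x _ => hQ x) (by linarith)
            (hQt ▸ sum_le_sum_of_forall_notMem_eq_zero s hQ hQB)
            (fun x hx => hPQ x (mem_insert_of_mem hx))
            (by linarith [hP a])
      _ = P a := sub_sub_cancel t (P a)
  have hu : P a ≤ ∑ b ∈ B, update Q a 0 b := by
    have := hPQ a (mem_insert_self a s)
    by_cases haB : a ∈ B
    · rw [sum_update_of_mem haB, zero_add]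
      linarith [sum_eq_add_sum_sdiff_singleton_of_mem haB Q]
    · rw [sum_update_of_notMem haB, hQt]
      linarith [hQB a haB]
  obtain ⟨g, hlg, hgu, hg⟩ := exists_le_le_sum_eq B hlu hl hu
  have hgQ : ∀ b, g b ≤ Q b := fun b => by
    rcases eq_or_ne b a with rfl | hba
    · exact (hgu b).trans (by rw [update_self]; exact hQ b)
    · simpa [hba] using hgu b
  refine ⟨g, fun b => (hlb b).trans (hlg b), hgQ, ?_, hg, fun x hx => ?_⟩
  · exact le_antisymm (by simpa using hgu a) ((hlb a).trans (hlg a))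
  · exact (le_max_right _ _).trans (by simpa [lb, hx] using hlg x)

theorem exists_isCoupling_diag_eq_zero [DecidableEq α] (A B : Finset α) {P Q : α → ℝ} {t : ℝ}
    (hP : ∀ a, 0 ≤ P a) (hQ : ∀ b, 0 ≤ Q b) (hPA : ∀ a ∉ A, P a = 0) (hQB : ∀ b ∉ B, Q b = 0)
    (hPt : ∑ a ∈ A, P a = t) (hQt : ∑ b ∈ B, Q b = t) (hPQ : ∀ a ∈ A, P a + Q a ≤ t) :
    ∃ J, IsCoupling_s16 A B P Q J ∧ ∀ a, J a a = 0 := by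
  induction A using Finset.induction_on generalizing P Q t with
  | empty =>
    have hQ0 : ∀ b, Q b = 0 := fun b => by
      by_cases hb : b ∈ B
      · exact (sum_eq_zero_iff_of_nonneg fun x _ => hQ x).1 (by simpa [← hPt] using hQt) b hb
      · exact hQB b hb
    exact ⟨0, .of_empty B (fun a => hPA a (notMem_empty a)) hQ0, fun _ => rfl⟩
  | @insert a s ha IH =>
    rw [sum_insert ha] at hPt
    obtain ⟨g, hg0, hgQ, hga, hgsum, hlg⟩ := exists_row_of_add_le ha hP hQ hQB hPt hQt hPQ
    have hgB : ∀ b ∉ B, g b = 0 := fun b hb => le_antisymm (hQB b hb ▸ hgQ b) (hg0 b)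
    obtain ⟨J, hJ, hJdiag⟩ := IH (P := update P a 0) (Q := Q - g) (t := t - P a)
      (fun x => by rcases eq_or_ne x a with rfl | hx <;> simp [*])
      (fun b => sub_nonneg.2 (hgQ b))
      (fun x hx => by
        rcases eq_or_ne x a with rfl | hxa
        · simp
        · simpa [hxa] using hPA x (by simp [hxa, hx]))
      (fun b hb => by simp [hQB b hb, hgB b hb])
      (by rw [sum_update_of_notMem ha]; linarith)
      (by simp only [Pi.sub_apply]; rw [sum_sub_distrib, hQt, hgsum])
      (fun x hx => by
        rw [update_of_ne (ne_of_mem_of_not_mem hx ha), Pi.sub_apply]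
        linarith [hlg x hx])
    refine ⟨update J a g, hJ.update_insert ha hg0 hgB hgsum, fun x => ?_⟩
    rcases eq_or_ne x a with rfl | hx
    · simpa using hga
    · simpa [hx] using hJdiag x

/-- Strassen's theorem for finite sets, singleton-constraint corollary: if
`P({a}) ≤ 1 - P'({a - δ})` for every `a ∈ A`, then there is a coupling of `P` and `P'`
putting zero mass on the diagonal `{(a,b) : a - b = δ}`. -/
theorem stmt_16 (A B : Finset ℝ) (P P' : ℝ → ℝ) (δ : ℝ)
    (hP : ∀ a, 0 ≤ P a) (hP' : ∀ b, 0 ≤ P' b)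
    (hPsupp : ∀ a, a ∉ A → P a = 0) (hP'supp : ∀ b, b ∉ B → P' b = 0)
    (hPsum : ∑ a ∈ A, P a = 1) (hP'sum : ∑ b ∈ B, P' b = 1)
    (hcond : ∀ a ∈ A, P a ≤ 1 - P' (a - δ)) :
    ∃ J : ℝ → ℝ → ℝ, (∀ a b, 0 ≤ J a b) ∧
      (∀ a b, a ∉ A ∨ b ∉ B → J a b = 0) ∧
      (∀ a, ∑ b ∈ B, J a b = P a) ∧
      (∀ b, ∑ a ∈ A, J a b = P' b) ∧
      (∀ a b, a - b = δ → J a b = 0) := by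
  set e := Equiv.subRight δ
  obtain ⟨J, hJ, hJdiag⟩ := exists_isCoupling_diag_eq_zero A (B.map e.symm.toEmbedding)
    (Q := P' ∘ e) hP (fun b => hP' _) hPsupp (fun b hb => hP'supp _ (by simpa [e] using hb))
    hPsum (by simpa [e] using hP'sum) (fun a ha => by
      simp only [comp_apply, e, Equiv.subRight_apply]
      linarith [hcond a ha])
  have hJ' := hJ.comp_equiv e
  refine ⟨_, hJ'.nonneg, hJ'.eq_zero, hJ'.sum_right, hJ'.sum_left, fun a b hab => ?_⟩
  obtain rfl : a = b + δ := by linarith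
  exact hJdiag _
end
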